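/- Let P : Fin 4 → ℝ be a probability vector with P i > 0 for all i and ∑_i P i = 1, and let z : Fin 4 → ℝ be a function on the probability space {0,1,2,3} that is not constant. Set μ = ∑_i P i · z i and σ² = ∑_i P i · (z i − μ)² (so σ² > 0). Then (z 0 − μ)² / σ² ≤ (1 − P 0)/P 0, with equality if and only if z 1 = z 2 = z 3 and z 0 ≠ z 1. Equivalently, the decidability index d' = (1/√2)·|z 0 − μ|/σ satisfies d' ≤ (1/√2)·√((1 − P 0)/P 0) and attains its maximum exactly when z 0 ≠ z 1 = z 2 = z 3, i.e., for (affinely rescaled) 0–1 coding. (This is the Lemma of Appendix A: under the ideal case the optimal coding scheme is 0–1 coding.) -/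
import Mathlib


/-- The Lemma of Appendix A: for a probability vector `P` on `{0,1,2,3}` with positive
entries and a non-constant coding scheme `z` with mean `μ` and variance `σ²`, one has
`σ² > 0` and `(z 0 − μ)²/σ² ≤ (1 − P 0)/P 0`, with equality iff `z 1 = z 2 = z 3` and
`z 0 ≠ z 1`; equivalently the decidability index `d' = (1/√2)·|z 0 − μ|/σ` satisfies
`d' ≤ (1/√2)·√((1 − P 0)/P 0)`, attained exactly for (rescaled) 0–1 coding. -/
theorem optimal_coding_is_zero_one (P : Fin 4 → ℝ) (hP : ∀ i, 0 < P i)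
    (hsum : ∑ i, P i = 1) (z : Fin 4 → ℝ) (hz : ¬ ∀ i j, z i = z j) :
    let μ : ℝ := ∑ i, P i * z i
    let σ2 : ℝ := ∑ i, P i * (z i - μ) ^ 2
    0 < σ2 ∧
    (z 0 - μ) ^ 2 / σ2 ≤ (1 - P 0) / P 0 ∧
    ((z 0 - μ) ^ 2 / σ2 = (1 - P 0) / P 0 ↔ (z 1 = z 2 ∧ z 2 = z 3 ∧ z 0 ≠ z 1)) ∧
    (1 / Real.sqrt 2) * (|z 0 - μ| / Real.sqrt σ2)
      ≤ (1 / Real.sqrt 2) * Real.sqrt ((1 - P 0) / P 0) ∧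
    ((1 / Real.sqrt 2) * (|z 0 - μ| / Real.sqrt σ2)
        = (1 / Real.sqrt 2) * Real.sqrt ((1 - P 0) / P 0)
      ↔ (z 1 = z 2 ∧ z 2 = z 3 ∧ z 0 ≠ z 1)) := by
  intro μ σ2
  have hμ : μ = P 0 * z 0 + P 1 * z 1 + P 2 * z 2 + P 3 * z 3 := by
    show (∑ i, P i * z i) = _
    simp [Fin.sum_univ_four]
  have hσ : σ2 = P 0 * (z 0 - μ) ^ 2 + P 1 * (z 1 - μ) ^ 2 + P 2 * (z 2 - μ) ^ 2
      + P 3 * (z 3 - μ) ^ 2 := by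
    show (∑ i, P i * (z i - μ) ^ 2) = _
    simp [Fin.sum_univ_four]
  have hP0 : P 0 = 1 - P 1 - P 2 - P 3 := by
    have := hsum
    simp [Fin.sum_univ_four] at this
    linarith
  have hzconst : ¬ (z 0 = z 1 ∧ z 1 = z 2 ∧ z 2 = z 3) := by
    intro ⟨h1, h2, h3⟩
    apply hz
    intro i j
    fin_cases i <;> fin_cases j <;> simp_all
  -- key Lagrange identity
  have key : (1 - P 0) * σ2 - P 0 * (z 0 - μ) ^ 2
      = P 1 * P 2 * (z 1 - z 2) ^ 2 + P 1 * P 3 * (z 1 - z 3) ^ 2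
        + P 2 * P 3 * (z 2 - z 3) ^ 2 := by
    rw [hσ, hμ, hP0]; ring
  have hn12 : 0 ≤ P 1 * P 2 * (z 1 - z 2) ^ 2 :=
    mul_nonneg (mul_nonneg (hP 1).le (hP 2).le) (sq_nonneg _)
  have hn13 : 0 ≤ P 1 * P 3 * (z 1 - z 3) ^ 2 :=
    mul_nonneg (mul_nonneg (hP 1).le (hP 3).le) (sq_nonneg _)
  have hn23 : 0 ≤ P 2 * P 3 * (z 2 - z 3) ^ 2 :=
    mul_nonneg (mul_nonneg (hP 2).le (hP 3).le) (sq_nonneg _)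
  have hterm : ∀ i : Fin 4, 0 ≤ P i * (z i - μ) ^ 2 := fun i =>
    mul_nonneg (hP i).le (sq_nonneg _)
  have cancel : ∀ i : Fin 4, P i * (z i - μ) ^ 2 ≤ 0 → z i = μ := by
    intro i hi
    have h1 : P i * (z i - μ) ^ 2 = 0 := le_antisymm hi (hterm i)
    have h2 : (z i - μ) ^ 2 = 0 := (mul_eq_zero.mp h1).resolve_left (hP i).ne'
    have h3 : z i - μ = 0 := by
      have := sq_eq_zero_iff.mp h2
      exact this
    linarith
  -- σ2 > 0
  have hσpos : 0 < σ2 := by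
    by_contra h
    push_neg at h
    have t0 := hterm 0
    have t1 := hterm 1
    have t2 := hterm 2
    have t3 := hterm 3
    have e0 : z 0 = μ := cancel 0 (by linarith)
    have e1 : z 1 = μ := cancel 1 (by linarith)
    have e2 : z 2 = μ := cancel 2 (by linarith)
    have e3 : z 3 = μ := cancel 3 (by linarith)
    exact hzconst ⟨by rw [e0, e1], by rw [e1, e2], by rw [e2, e3]⟩
  have hP0pos := hP 0
  -- main inequality
  have hle : (z 0 - μ) ^ 2 / σ2 ≤ (1 - P 0) / P 0 := by
    rw [div_le_div_iff₀ hσpos hP0pos]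
    linarith [key, hn12, hn13, hn23]
  -- equality iff
  have heq : (z 0 - μ) ^ 2 / σ2 = (1 - P 0) / P 0 ↔ (z 1 = z 2 ∧ z 2 = z 3 ∧ z 0 ≠ z 1) := by
    rw [div_eq_div_iff hσpos.ne' hP0pos.ne']
    constructor
    · intro h
      have hz12 : P 1 * P 2 * (z 1 - z 2) ^ 2 ≤ 0 := by linarith [key]
      have hz13 : P 1 * P 3 * (z 1 - z 3) ^ 2 ≤ 0 := by linarith [key]
      have sq12 : (z 1 - z 2) ^ 2 = 0 := by
        have h1 : P 1 * P 2 * (z 1 - z 2) ^ 2 = 0 := le_antisymm hz12 hn12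
        exact (mul_eq_zero.mp h1).resolve_left (mul_pos (hP 1) (hP 2)).ne'
      have sq13 : (z 1 - z 3) ^ 2 = 0 := by
        have h1 : P 1 * P 3 * (z 1 - z 3) ^ 2 = 0 := le_antisymm hz13 hn13
        exact (mul_eq_zero.mp h1).resolve_left (mul_pos (hP 1) (hP 3)).ne'
      have h12 : z 1 = z 2 := by have := sq_eq_zero_iff.mp sq12; linarith
      have h13 : z 1 = z 3 := by have := sq_eq_zero_iff.mp sq13; linarith
      have h23 : z 2 = z 3 := h12 ▸ h13
      refine ⟨h12, h23, ?_⟩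
      intro h01
      exact hzconst ⟨h01, h12, h23⟩
    · rintro ⟨h12, h23, h01⟩
      have h13 : z 1 = z 3 := h12.trans h23
      rw [← h12, ← h13] at key
      have hz0 : P 1 * P 2 * (z 1 - z 1) ^ 2 + P 1 * P 3 * (z 1 - z 1) ^ 2
          + P 2 * P 3 * (z 1 - z 1) ^ 2 = 0 := by ring
      linarith [key]
  -- sqrt versions
  have hP0le : 0 ≤ (1 - P 0) / P 0 := by
    apply div_nonneg _ hP0pos.le
    have h1 := hP 1; have h2 := hP 2; have h3 := hP 3
    rw [hP0]; linarith
  have habs : |z 0 - μ| / Real.sqrt σ2 = Real.sqrt ((z 0 - μ) ^ 2 / σ2) := by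
    rw [Real.sqrt_div (sq_nonneg _), Real.sqrt_sq_eq_abs]
  have hs2 : (0:ℝ) < 1 / Real.sqrt 2 := by positivity
  have hsqle : (1 / Real.sqrt 2) * (|z 0 - μ| / Real.sqrt σ2)
      ≤ (1 / Real.sqrt 2) * Real.sqrt ((1 - P 0) / P 0) := by
    rw [habs]
    exact mul_le_mul_of_nonneg_left (Real.sqrt_le_sqrt hle) hs2.le
  refine ⟨hσpos, hle, heq, hsqle, ?_⟩
  rw [habs]
  constructor
  · intro h
    have h' : Real.sqrt ((z 0 - μ) ^ 2 / σ2) = Real.sqrt ((1 - P 0) / P 0) :=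
      mul_left_cancel₀ hs2.ne' h
    exact heq.mp ((Real.sqrt_inj (div_nonneg (sq_nonneg _) hσpos.le) hP0le).mp h')
  · intro h
    rw [heq.mpr h]
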